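/- Stratified sampling budget exhaustion: with the CCS allocation of the previous context (strata sizes n_1 ≤ ... ≤ n_k processed in increasing size order, b_i = min(n_i, ⌊m_i/(k−i+1)⌋), m_{i+1} = m_i − b_i, m_1 = m ≤ Σ n_i), the final leftover budget m_{k+1} = m − Σ_{i=1}^k b_i satisfies m_{k+1} < k, i.e., the algorithm uses all but at most k − 1 units of the budget (the loss coming only from floor rounding). -/

import Mathlib

/-! Processing strata smallest first, the remaining budget never exceeds the total size of the
remaining strata. Hence the last stratum absorbs whatever budget is left, and the allocation
spends the whole budget: the leftover is in fact `0`. -/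

/-- The CCS budget allocation: processing strata (given as a list of sizes, smallest
first) in order, each stratum receives the minimum of its size and the floor of the
remaining budget divided by the number of remaining strata. -/
def ccsAlloc : List ℕ → ℕ → List ℕ
  | [], _ => []
  | n :: ns, m =>
      let b := min n (m / (ns.length + 1))
      b :: ccsAlloc ns (m - b)

/- Once the floor `q = m / (k + 1)` is taken, every stratum of `t` exceeds `q`, while
`m - q ≤ (q + 1) * k` since `m < (q + 1) * (k + 1)`. -/
lemma sub_ccsStep_le_sum {n m : ℕ} {t : List ℕ} (hmin : ∀ x ∈ t, n ≤ x)
    (hm : m ≤ n + t.sum) : m - min n (m / (t.length + 1)) ≤ t.sum := by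
  rcases le_or_gt n (m / (t.length + 1)) with hn | hq
  · rw [min_eq_left hn]
    omega
  · rw [min_eq_right hq.le]
    set q := m / (t.length + 1)
    have hlt : m < (q + 1) * (t.length + 1) :=
      Nat.lt_mul_of_div_lt (Nat.lt_succ_self q) t.length.succ_pos
    have hsum : t.length * (q + 1) ≤ t.sum :=
      List.card_nsmul_le_sum t (q + 1) fun x hx => by have := hmin x hx; omega
    have hexpand : (q + 1) * (t.length + 1) = t.length * (q + 1) + q + 1 := by ring
    omega

lemma sum_ccsAlloc_eq (ns : List ℕ) (m : ℕ) (hsorted : ns.Pairwise (· ≤ ·))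
    (hm : m ≤ ns.sum) : (ccsAlloc ns m).sum = m := by
  induction ns generalizing m with
  | nil => simp only [List.sum_nil, nonpos_iff_eq_zero] at hm; simp [ccsAlloc, hm]
  | cons n t ih =>
    obtain ⟨hmin, htail⟩ := List.pairwise_cons.mp hsorted
    have hrest := ih _ htail (sub_ccsStep_le_sum hmin (by simpa using hm))
    have hstep : min n (m / (t.length + 1)) ≤ m := (min_le_right _ _).trans (Nat.div_le_self _ _)
    simp only [ccsAlloc, List.sum_cons, hrest]
    omega

/-- Budget exhaustion of the CCS allocation: for a nonempty list of strata sizes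
sorted in increasing order and total budget `m ≤ Σ n_i`, the final leftover budget
`m − Σ b_i` is strictly less than the number of strata `k`. -/
theorem ccsAlloc_leftover_lt (ns : List ℕ) (m : ℕ)
    (hne : ns ≠ []) (hsorted : ns.Pairwise (· ≤ ·)) (hm : m ≤ ns.sum) :
    m - (ccsAlloc ns m).sum < ns.length := by
  rw [sum_ccsAlloc_eq ns m hsorted hm, Nat.sub_self]
  exact List.length_pos_of_ne_nil hne
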